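/- For all integers n, j with 0 ≤ 2j ≤ n, there is a bijection between the set of partitions λ of n with |λ_e| = j and the set of ordered pairs (α, β) of partitions such that |α| + |β| = j and β has at most n − 2j parts. -/

import Mathlib

/-- The parts of a partition, listed in weakly decreasing order
(so that the `j`-th entry, `1`-based, is `a_j`). -/
def sortedParts {n : ℕ} (lam : Nat.Partition n) : List ℕ :=
  lam.parts.sort (· ≥ ·)

/-- The sum of the parts of even index `a_2 + a_4 + a_6 + ⋯` of a partition. -/
def evenIndexSum {n : ℕ} (lam : Nat.Partition n) : ℕ :=
  ∑ j ∈ Finset.range (sortedParts lam).length,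
    if (j + 1) % 2 = 0 then (sortedParts lam).getD j 0 else 0

/-!
Under conjugation, the cells of `λ` lying in its even-indexed rows are exactly the cells in
even-indexed positions of the columns, i.e. of the parts of the conjugate `μ`; hence
`|λ_e| = ∑ ⌊μ_i / 2⌋` (with 0-indexed cells `(i, j)`, "even index" reads `2 ∣ i + 1`).
Then `n = 2j + #(odd parts of μ)`. Halving the even parts of `μ` gives `α`; replacing each odd part
`2b + 1` by `b` and discarding the zeros gives `β`, and the discarded ones are recovered from the
fact that `μ` has exactly `n - 2j` odd parts.
-/

open Finset

lemma sortedParts_sortedGE {n : ℕ} (lam : Nat.Partition n) : (sortedParts lam).SortedGE :=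
  List.sortedGE_iff_pairwise.2 (Multiset.pairwise_sort _ _)

lemma coe_sortedParts {n : ℕ} (lam : Nat.Partition n) :
    (sortedParts lam : Multiset ℕ) = lam.parts :=
  Multiset.sort_eq _ _

lemma pos_of_mem_sortedParts {n : ℕ} (lam : Nat.Partition n) {x : ℕ}
    (hx : x ∈ sortedParts lam) : 0 < x :=
  lam.parts_pos (by rwa [← coe_sortedParts, Multiset.mem_coe])

lemma sum_sortedParts {n : ℕ} (lam : Nat.Partition n) : (sortedParts lam).sum = n := by
  rw [← Multiset.sum_coe, coe_sortedParts, lam.parts_sum]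

lemma sortedParts_eq_of_parts_eq {n : ℕ} {lam : Nat.Partition n} {w : List ℕ}
    (hw : w.SortedGE) (h : lam.parts = w) : sortedParts lam = w :=
  List.Perm.eq_of_sortedGE (sortedParts_sortedGE lam) hw
    (Multiset.coe_eq_coe.1 (by rw [coe_sortedParts, h]))

namespace YoungDiagram

variable (μ : YoungDiagram)

lemma rowLen_eq_zero {i : ℕ} (hi : μ.colLen 0 ≤ i) : μ.rowLen i = 0 := by
  by_contra h
  have := mem_iff_lt_colLen.1 (mem_iff_lt_rowLen.2 (Nat.pos_of_ne_zero h))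
  omega

lemma getD_rowLens (i : ℕ) : μ.rowLens.getD i 0 = μ.rowLen i := by
  by_cases hi : i < μ.rowLens.length
  · rw [List.getD_eq_getElem _ _ hi, get_rowLens]
  · rw [List.getD_eq_default _ _ (not_lt.1 hi), rowLen_eq_zero]
    simpa using hi

lemma sum_map_rowLens {M : Type*} [AddCommMonoid M] (f : ℕ → M) :
    (μ.rowLens.map f).sum = ∑ i ∈ range (μ.colLen 0), f (μ.rowLen i) := by
  rw [rowLens, List.map_map, Finset.sum_eq_multiset_sum]
  rfl

lemma sum_cells {M : Type*} [AddCommMonoid M] (f : ℕ × ℕ → M) :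
    ∑ c ∈ μ.cells, f c = ∑ i ∈ range (μ.colLen 0), ∑ j ∈ range (μ.rowLen i), f (i, j) := by
  rw [← Finset.sum_fiberwise_of_maps_to (g := Prod.fst) (t := range (μ.colLen 0))]
  · refine Finset.sum_congr rfl fun i _ => ?_
    rw [show {c ∈ μ.cells | c.1 = i} = μ.row i from rfl, row_eq_prod, Finset.sum_product,
      Finset.sum_singleton]
  · rintro ⟨i, j⟩ hc
    rw [mem_range, ← mem_iff_lt_colLen]
    exact μ.up_left_mem le_rfl (Nat.zero_le j) ((mem_cells _).1 hc)

lemma card_eq_sum_rowLens : μ.card = μ.rowLens.sum := by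
  rw [YoungDiagram.card, card_eq_sum_ones, sum_cells, ← List.map_id' μ.rowLens,
    sum_map_rowLens]
  simp

lemma card_filter_fst (p : ℕ → Prop) [DecidablePred p] :
    #{c ∈ μ.cells | p c.1} = ∑ i ∈ range (μ.colLen 0), if p i then μ.rowLen i else 0 := by
  rw [card_filter, sum_cells]
  refine sum_congr rfl fun i _ => ?_
  split_ifs <;> simp

lemma card_filter_two_dvd_snd_add_one :
    #{c ∈ μ.cells | 2 ∣ c.2 + 1} = (μ.rowLens.map (· / 2)).sum := by
  rw [card_filter, sum_cells, sum_map_rowLens]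
  refine sum_congr rfl fun i _ => ?_
  rw [← Nat.card_multiples, card_filter]

lemma card_filter_transpose (p : ℕ × ℕ → Prop) [DecidablePred p] :
    #{c ∈ μ.transpose.cells | p c} = #{c ∈ μ.cells | p c.swap} := by
  simp only [transpose, Equiv.finsetCongr_apply, filter_map, Function.Embedding.coeFn_mk,
    Equiv.coe_prodComm, Function.comp_def, card_map]
  rfl

lemma card_transpose : μ.transpose.card = μ.card := by
  simp [transpose, YoungDiagram.card]

lemma rowLens_equivListRowLens_symm (w : {w : List ℕ // w.SortedGE ∧ ∀ x ∈ w, 0 < x}) :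
    (equivListRowLens.symm w).rowLens = w.1 :=
  congrArg Subtype.val (equivListRowLens.apply_symm_apply w)

end YoungDiagram

namespace Nat.Partition

def equivSortedParts (n : ℕ) :
    Nat.Partition n ≃ {w : {w : List ℕ // w.SortedGE ∧ ∀ x ∈ w, 0 < x} // w.1.sum = n} where
  toFun lam := ⟨⟨sortedParts lam, sortedParts_sortedGE lam, fun _ => pos_of_mem_sortedParts lam⟩,
    sum_sortedParts lam⟩
  invFun w := ⟨w.1.1, fun hx => w.1.2.2 _ (Multiset.mem_coe.1 hx), by rw [Multiset.sum_coe, w.2]⟩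
  left_inv lam := Nat.Partition.ext (coe_sortedParts lam)
  right_inv w := by
    ext1; ext1
    dsimp only
    exact sortedParts_eq_of_parts_eq w.1.2.1 rfl

def equivYoungDiagram (n : ℕ) : Nat.Partition n ≃ {μ : YoungDiagram // μ.card = n} :=
  (equivSortedParts n).trans <| YoungDiagram.equivListRowLens.symm.subtypeEquiv fun w => by
    rw [YoungDiagram.card_eq_sum_rowLens, YoungDiagram.rowLens_equivListRowLens_symm]

lemma rowLens_equivYoungDiagram {n : ℕ} (lam : Nat.Partition n) :
    (equivYoungDiagram n lam).1.rowLens = sortedParts lam :=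
  YoungDiagram.rowLens_equivListRowLens_symm (equivSortedParts n lam).1

lemma parts_equivYoungDiagram_symm {n : ℕ} (μ : {μ : YoungDiagram // μ.card = n}) :
    ((equivYoungDiagram n).symm μ).parts = μ.1.rowLens := by
  rfl

def conjugate (n : ℕ) : Nat.Partition n ≃ Nat.Partition n :=
  (equivYoungDiagram n).trans <|
    (YoungDiagram.transposeOrderIso.toEquiv.subtypeEquiv fun μ => by
      simp [YoungDiagram.transposeOrderIso, YoungDiagram.card_transpose]).trans
      (equivYoungDiagram n).symm

def sumHalfParts {n : ℕ} (μ : Nat.Partition n) : ℕ :=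
  (μ.parts.map (· / 2)).sum

lemma evenIndexSum_eq_card_filter {n : ℕ} (lam : Nat.Partition n) :
    evenIndexSum lam = #{c ∈ (equivYoungDiagram n lam).1.cells | 2 ∣ c.1 + 1} := by
  rw [YoungDiagram.card_filter_fst (p := (2 ∣ · + 1)), evenIndexSum, ← rowLens_equivYoungDiagram,
    YoungDiagram.length_rowLens]
  refine sum_congr rfl fun i _ => ?_
  simp only [YoungDiagram.getD_rowLens, Nat.dvd_iff_mod_eq_zero]

lemma sumHalfParts_equivYoungDiagram_symm {n : ℕ} (μ : {μ : YoungDiagram // μ.card = n}) :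
    sumHalfParts ((equivYoungDiagram n).symm μ) = #{c ∈ μ.1.cells | 2 ∣ c.2 + 1} := by
  rw [YoungDiagram.card_filter_two_dvd_snd_add_one, sumHalfParts, parts_equivYoungDiagram_symm,
    Multiset.map_coe, Multiset.sum_coe]

theorem evenIndexSum_eq_sumHalfParts_conjugate {n : ℕ} (lam : Nat.Partition n) :
    evenIndexSum lam = sumHalfParts (conjugate n lam) := by
  rw [evenIndexSum_eq_card_filter, conjugate, Equiv.trans_apply, Equiv.trans_apply,
    sumHalfParts_equivYoungDiagram_symm]
  exact (YoungDiagram.card_filter_transpose _ fun c => 2 ∣ c.2 + 1).symm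

end Nat.Partition

lemma Nat.two_mul_add_one_div_two (x : ℕ) : (2 * x + 1) / 2 = x := by omega

def parityEquiv : Multiset ℕ × Multiset ℕ ≃ Multiset ℕ where
  toFun q := q.1.map (2 * ·) + q.2.map (2 * · + 1)
  invFun s := ((s.filter Even).map (· / 2), (s.filter (¬Even ·)).map (· / 2))
  left_inv q := by
    simp only [Multiset.filter_add, Multiset.filter_map, Function.comp_def, even_two_mul,
      Nat.even_add_one, not_true, not_false_eq_true, Multiset.filter_false, Multiset.filter_true,
      Multiset.map_zero]
    simp [Nat.two_mul_add_one_div_two]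
  right_inv s := by
    conv_rhs => rw [← Multiset.filter_add_not Even s]
    simp only [Multiset.map_map, Function.comp_def]
    congr 1 <;> refine (Multiset.map_congr rfl fun x hx => ?_).trans (Multiset.map_id' _)
    · exact Nat.two_mul_div_two_of_even (Multiset.of_mem_filter hx)
    · exact Nat.two_mul_div_two_add_one_of_odd
        (Nat.not_even_iff_odd.1 (Multiset.mem_filter.1 hx).2)

lemma sum_parityEquiv (q : Multiset ℕ × Multiset ℕ) :
    (parityEquiv q).sum = 2 * (q.1.sum + q.2.sum) + Multiset.card q.2 := by
  simp only [parityEquiv, Equiv.coe_fn_mk, Multiset.sum_add, Multiset.sum_map_add,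
    Multiset.map_const', Multiset.sum_replicate, smul_eq_mul, mul_one]
  rw [Multiset.sum_map_mul_left, Multiset.sum_map_mul_left, Multiset.map_id', Multiset.map_id']
  ring

lemma sum_map_div_two_parityEquiv (q : Multiset ℕ × Multiset ℕ) :
    ((parityEquiv q).map (· / 2)).sum = q.1.sum + q.2.sum := by
  simp [parityEquiv, Multiset.map_map, Nat.two_mul_add_one_div_two]

lemma forall_pos_parityEquiv_iff (q : Multiset ℕ × Multiset ℕ) :
    (∀ x ∈ parityEquiv q, 0 < x) ↔ ∀ x ∈ q.1, 0 < x := by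
  simp [parityEquiv, or_imp, forall_and]

namespace Nat.Partition

def sumHalfPartsEquiv (n j : ℕ) : {μ : Nat.Partition n // μ.sumHalfParts = j} ≃
    {s : Multiset ℕ // (∀ x ∈ s, 0 < x) ∧ s.sum = n ∧ (s.map (· / 2)).sum = j} where
  toFun μ := ⟨μ.1.parts, fun _ => μ.1.parts_pos, μ.1.parts_sum, μ.2⟩
  invFun s := ⟨⟨s.1, s.2.1 _, s.2.2.1⟩, s.2.2.2⟩
  left_inv _ := rfl
  right_inv _ := rfl

def halvesEquiv {n j : ℕ} (hj : 2 * j ≤ n) : {μ : Nat.Partition n // μ.sumHalfParts = j} ≃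
    {q : Multiset ℕ × Multiset ℕ //
      (∀ x ∈ q.1, 0 < x) ∧ q.1.sum + q.2.sum = j ∧ Multiset.card q.2 = n - 2 * j} :=
  (sumHalfPartsEquiv n j).trans <| (parityEquiv.subtypeEquiv fun q => by
    rw [forall_pos_parityEquiv_iff, sum_parityEquiv, sum_map_div_two_parityEquiv]
    exact and_congr_right fun _ => by omega).symm

lemma sigma_ext {p q : Σ a, Nat.Partition a} (h : p.2.parts = q.2.parts) : p = q := by
  obtain ⟨a, P⟩ := p
  obtain ⟨b, Q⟩ := q
  obtain rfl : a = b := by rw [← P.parts_sum, ← Q.parts_sum, h]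
  exact congrArg _ (Nat.Partition.ext h)

end Nat.Partition

lemma Multiset.filter_ne_zero_add_replicate (s : Multiset ℕ) :
    s.filter (· ≠ 0) + replicate (card s - card (s.filter (· ≠ 0))) 0 = s := by
  conv_rhs => rw [← filter_add_not (· ≠ 0) s]
  congr 1
  rw [eq_comm, eq_replicate]
  refine ⟨?_, fun x hx => not_not.1 (mem_filter.1 hx).2⟩
  have := congrArg card (filter_add_not (· ≠ 0) s)
  rw [card_add] at this
  omega

def dropZerosEquiv (j k : ℕ) :
    {q : Multiset ℕ × Multiset ℕ //
      (∀ x ∈ q.1, 0 < x) ∧ q.1.sum + q.2.sum = j ∧ Multiset.card q.2 = k} ≃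
    {q : (Σ a : ℕ, Nat.Partition a) × (Σ b : ℕ, Nat.Partition b) //
      q.1.1 + q.2.1 = j ∧ q.2.2.parts.card ≤ k} where
  toFun q := ⟨(⟨_, .ofMultiset q.1.1⟩, ⟨_, .ofMultiset q.1.2⟩), q.2.2.1,
    (Multiset.card_le_card (Multiset.filter_le _ _)).trans_eq q.2.2.2⟩
  invFun q := ⟨(q.1.1.2.parts, q.1.2.2.parts + Multiset.replicate (k - q.1.2.2.parts.card) 0),
    fun _ => q.1.1.2.parts_pos, by simp [Nat.Partition.parts_sum, q.2.1], by simp [q.2.2]⟩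
  left_inv q := by
    obtain ⟨⟨e, o⟩, he, -, rfl⟩ := q
    ext1
    simp [Multiset.filter_eq_self.2 fun x hx => (he x hx).ne', Multiset.filter_ne_zero_add_replicate]
  right_inv q := by
    obtain ⟨⟨⟨a, α⟩, ⟨b, β⟩⟩, -⟩ := q
    ext1
    refine Prod.ext (Nat.Partition.sigma_ext ?_) (Nat.Partition.sigma_ext ?_)
    · exact Multiset.filter_eq_self.2 fun x hx => (α.parts_pos hx).ne'
    · simp [Multiset.filter_add, Multiset.filter_eq_self.2 fun x hx => (β.parts_pos hx).ne',
        Multiset.mem_replicate]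

theorem stmt_3 (n j : ℕ) (hj : 2 * j ≤ n) :
    Nonempty
      ({lam : Nat.Partition n // evenIndexSum lam = j} ≃
        {q : (Σ a : ℕ, Nat.Partition a) × (Σ b : ℕ, Nat.Partition b) //
          q.1.1 + q.2.1 = j ∧ q.2.2.parts.card ≤ n - 2 * j}) :=
  ⟨((Nat.Partition.conjugate n).subtypeEquiv fun lam => by
      rw [Nat.Partition.evenIndexSum_eq_sumHalfParts_conjugate]).trans <|
    (Nat.Partition.halvesEquiv hj).trans (dropZerosEquiv j (n - 2 * j))⟩
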